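/- If a simplicial complex K is not flag, then K has a full subcomplex with nonvanishing first reduced homology; specifically, any minimal non-face with at least 3 vertices induces a full subcomplex homeomorphic to the boundary of a simplex of dimension ≥ 2, which is not homotopy equivalent to a discrete set. -/
import Mathlib


/-- The sign `ε(i, σ) = (-1)^{#{j ∈ σ : j < i}}`. -/
def eps {m : ℕ} (i : Fin m) (σ : Finset (Fin m)) : ℤ :=
  (-1) ^ (σ.filter (fun j => j < i)).card

/-- The augmented (reduced) simplicial chain module on subsets of `[m]`. -/
abbrev Ch (m : ℕ) := Finset (Fin m) →₀ ℤ

/-- The simplicial boundary `∂(σ) = Σ_{i ∈ σ} ε(i,σ) (σ \ {i})`. -/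
noncomputable def bdry {m : ℕ} (x : Ch m) : Ch m :=
  x.sum fun σ c => ∑ i ∈ σ, (c * eps i σ) • Finsupp.single (σ.erase i) 1

/-- `K` is a flag complex: every set of vertices pairwise joined by edges is a face. -/
def IsFlag {m : ℕ} (K : Finset (Finset (Fin m))) : Prop :=
  ∀ S : Finset (Fin m), (∀ i ∈ S, ∀ j ∈ S, i ≠ j → ({i, j} : Finset (Fin m)) ∈ K) → S ∈ K

section Aux
open Finset

lemma eps_ne_zero {m : ℕ} (i : Fin m) (σ : Finset (Fin m)) : eps i σ ≠ 0 := by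
  simp [eps]

noncomputable def Bd (m : ℕ) : Ch m →+ Ch m :=
  Finsupp.liftAddHom fun σ => AddMonoidHom.mk'
    (fun c => ∑ i ∈ σ, (c * eps i σ) • Finsupp.single (σ.erase i) 1)
    (fun a b => by simp [add_mul, add_smul, Finset.sum_add_distrib])

lemma bdry_eq {m : ℕ} (x : Ch m) : bdry x = Bd m x := rfl

lemma Bd_single {m : ℕ} (σ : Finset (Fin m)) (c : ℤ) :
    Bd m (Finsupp.single σ c) = ∑ i ∈ σ, (c * eps i σ) • Finsupp.single (σ.erase i) 1 := by
  simp [Bd]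

lemma eps_erase_aux {m : ℕ} {i j : Fin m} {σ : Finset (Fin m)} (hi : i ∈ σ) (hj : j ∈ σ)
    (hij : i < j) :
    eps i σ * eps j (σ.erase i) = -(eps j σ * eps i (σ.erase j)) := by
  have h1 : (σ.erase i).filter (fun k => k < j) = (σ.filter (fun k => k < j)).erase i := by
    rw [Finset.filter_erase]
  have h2 : (σ.erase j).filter (fun k => k < i) = σ.filter (fun k => k < i) := by
    rw [Finset.filter_erase, Finset.erase_eq_of_notMem]
    simp only [Finset.mem_filter]
    exact fun h => absurd h.2 (not_lt.2 hij.le)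
  have hmem : i ∈ σ.filter (fun k => k < j) := Finset.mem_filter.2 ⟨hi, hij⟩
  have hcard : ((σ.erase i).filter (fun k => k < j)).card
      = (σ.filter (fun k => k < j)).card - 1 := by
    rw [h1, Finset.card_erase_of_mem hmem]
  obtain ⟨n, hn⟩ := Nat.exists_eq_succ_of_ne_zero
    (Finset.card_ne_zero_of_mem hmem)
  unfold eps
  rw [hcard, h2, hn]
  simp only [Nat.succ_sub_one, pow_succ]
  ring

lemma eps_erase {m : ℕ} {i j : Fin m} {σ : Finset (Fin m)} (hi : i ∈ σ) (hj : j ∈ σ)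
    (hij : i ≠ j) :
    eps i σ * eps j (σ.erase i) = -(eps j σ * eps i (σ.erase j)) := by
  rcases lt_or_gt_of_ne hij with h | h
  · exact eps_erase_aux hi hj h
  · have := eps_erase_aux hj hi h
    linarith

lemma z0_apply {m : ℕ} (I : Finset (Fin m)) {i₀ : Fin m} (h₀ : i₀ ∈ I) :
    (∑ i ∈ I, eps i I • Finsupp.single (I.erase i) (1:ℤ)) (I.erase i₀) = eps i₀ I := by
  rw [Finset.sum_apply']
  rw [Finset.sum_eq_single i₀]
  · simp
  · intro i hi hne
    have : I.erase i ≠ I.erase i₀ := fun h => hne ((Finset.erase_inj I hi).1 h)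
    simp [Finsupp.single_apply, this]
  · intro h; exact absurd h₀ h

lemma bdry_z0 {m : ℕ} (I : Finset (Fin m)) :
    bdry (∑ i ∈ I, eps i I • Finsupp.single (I.erase i) (1:ℤ)) = 0 := by
  rw [bdry_eq, map_sum]
  have step : ∀ i ∈ I, Bd m (eps i I • Finsupp.single (I.erase i) (1:ℤ))
      = ∑ j ∈ I.erase i, (eps i I * eps j (I.erase i)) •
          Finsupp.single ((I.erase i).erase j) (1:ℤ) := by
    intro i _
    rw [AddMonoidHom.map_zsmul, Bd_single, Finset.smul_sum]
    congr 1; ext j; rw [smul_smul]; ring_nf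
  rw [Finset.sum_congr rfl step, Finset.sum_sigma']
  refine Finset.sum_involution (fun p _ => ⟨p.2, p.1⟩) ?_ ?_ ?_ ?_
  · rintro ⟨i, j⟩ hp
    simp only [Finset.mem_sigma] at hp
    obtain ⟨hi, hj⟩ := hp
    have hji : i ≠ j := fun h => (Finset.notMem_erase i I) (h ▸ hj)
    have hjI : j ∈ I := Finset.mem_of_mem_erase hj
    rw [Finset.erase_right_comm (a := j) (b := i)]
    rw [eps_erase hi hjI hji]
    simp [add_smul]
  · rintro ⟨i, j⟩ hp _
    simp only [Finset.mem_sigma] at hp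
    intro h
    have : i = j := congrArg Sigma.fst h.symm
    exact (Finset.notMem_erase i I) (this ▸ hp.2)
  · rintro ⟨i, j⟩ hp
    simp only [Finset.mem_sigma] at hp ⊢
    exact ⟨Finset.mem_of_mem_erase hp.2,
      Finset.mem_erase.2 ⟨fun h => (Finset.notMem_erase i I) (h ▸ hp.2), hp.1⟩⟩
  · rintro ⟨i, j⟩ _; rfl

end Aux

/-- If a simplicial complex `K` is not flag, then `K` has a minimal non-face `I` with at
least 3 vertices; the induced full subcomplex `K_I` is the boundary of the simplex on
`I` (a sphere of dimension `|I| - 2 ≥ 1`), which has nonvanishing reduced homology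
(a nonzero cycle in degree `|I| - 2` that is not a boundary), so `K_I` is not homotopy
equivalent to a discrete set. -/
theorem not_flag_has_nonacyclic_full_subcomplex {m : ℕ} (K : Finset (Finset (Fin m)))
    (hempty : ∅ ∈ K) (hverts : ∀ i : Fin m, {i} ∈ K)
    (hdown : ∀ σ ∈ K, ∀ τ ⊆ σ, τ ∈ K)
    (hnotflag : ¬ IsFlag K) :
    ∃ I : Finset (Fin m), 3 ≤ I.card ∧ I ∉ K ∧ (∀ S, S ⊂ I → S ∈ K) ∧
      (∀ σ : Finset (Fin m), (σ ∈ K ∧ σ ⊆ I) ↔ σ ⊂ I) ∧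
      ∃ z : Ch m, z ≠ 0 ∧ bdry z = 0 ∧
        (∀ σ ∈ z.support, σ ⊂ I ∧ σ.card = I.card - 1) ∧
        ¬ ∃ y : Ch m, (∀ σ ∈ y.support, σ ∈ K ∧ σ ⊆ I) ∧ bdry y = z := by
  rw [IsFlag] at hnotflag
  push_neg at hnotflag
  obtain ⟨S, hS, hSK⟩ := hnotflag
  obtain ⟨I, hImem, hImin⟩ := Finset.exists_min_image (S.powerset.filter (· ∉ K))
    Finset.card ⟨S, by simp [hSK]⟩
  simp only [Finset.mem_filter, Finset.mem_powerset] at hImem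
  obtain ⟨hIS, hIK⟩ := hImem
  have hmin : ∀ T, T ⊂ I → T ∈ K := by
    intro T hT
    by_contra hTK
    have hTmem : T ∈ S.powerset.filter (· ∉ K) := by
      simp only [Finset.mem_filter, Finset.mem_powerset]
      exact ⟨hT.subset.trans hIS, hTK⟩
    exact absurd (Finset.card_lt_card hT) (not_lt.2 (hImin T hTmem))
  have hcard : 3 ≤ I.card := by
    by_contra h
    push_neg at h
    apply hIK
    have h2 : I.card = 0 ∨ I.card = 1 ∨ I.card = 2 := by omega
    rcases h2 with h2 | h2 | h2
    · rw [Finset.card_eq_zero] at h2; subst h2; exact hempty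
    · obtain ⟨i, rfl⟩ := Finset.card_eq_one.1 h2; exact hverts i
    · obtain ⟨i, j, hij, rfl⟩ := Finset.card_eq_two.1 h2
      exact hS i (hIS (by simp)) j (hIS (by simp)) hij
  have hfull : ∀ σ : Finset (Fin m), (σ ∈ K ∧ σ ⊆ I) ↔ σ ⊂ I := by
    intro σ
    constructor
    · rintro ⟨hσK, hσI⟩
      exact lt_of_le_of_ne hσI (fun h => hIK (h ▸ hσK))
    · intro h
      exact ⟨hmin σ h, h.subset⟩
  obtain ⟨i₀, hi₀⟩ := Finset.card_pos.1 (show 0 < I.card by omega)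
  refine ⟨I, hcard, hIK, hmin, hfull,
    ∑ i ∈ I, eps i I • Finsupp.single (I.erase i) (1:ℤ), ?_, bdry_z0 I, ?_, ?_⟩
  · intro h
    have := z0_apply I hi₀
    rw [h] at this
    exact eps_ne_zero i₀ I this.symm
  · intro σ hσ
    have hz : (∑ i ∈ I, eps i I • Finsupp.single (I.erase i) (1:ℤ)) σ ≠ 0 :=
      Finsupp.mem_support_iff.1 hσ
    have hex : ∃ i ∈ I, I.erase i = σ := by
      by_contra hc
      push_neg at hc
      apply hz
      rw [Finset.sum_apply']
      refine Finset.sum_eq_zero fun i hi => ?_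
      simp [Finsupp.single_apply, hc i hi]
    obtain ⟨i, hi, rfl⟩ := hex
    exact ⟨Finset.erase_ssubset hi, Finset.card_erase_of_mem hi⟩
  · rintro ⟨y, hy, hby⟩
    have hzτ := z0_apply I hi₀
    rw [← hby] at hzτ
    have hzero : (bdry y) (I.erase i₀) = 0 := by
      unfold bdry
      rw [Finsupp.sum_apply, Finsupp.sum]
      refine Finset.sum_eq_zero fun σ hσ => ?_
      rw [Finset.sum_apply']
      refine Finset.sum_eq_zero fun i hi => ?_
      have hσI : σ ⊂ I := (hfull σ).1 (hy σ hσ)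
      have hne : σ.erase i ≠ I.erase i₀ := by
        intro h
        have h1 := congrArg Finset.card h
        rw [Finset.card_erase_of_mem hi, Finset.card_erase_of_mem hi₀] at h1
        have := Finset.card_lt_card hσI
        omega
      simp [Finsupp.single_apply, hne]
    rw [hzero] at hzτ
    exact eps_ne_zero i₀ I hzτ.symm
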